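/- Let m ≥ 0, h ≥ 0, and let a < b be reals with (a + b)/2 ≥ 0. Then ∫_a^b Φ(m x + h) dμ₁(x) ≥ ( ∫_ℝ Φ(m x + h) dμ₁(x) ) · μ₁([a,b]). Equivalently, for the half-plane K = {(x,y) ∈ ℝ² : y ≤ m x + h} and the strip L = {(x,y) : a ≤ x ≤ b}, one has μ₂(K ∩ L) ≥ μ₂(K) · μ₂(L). -/

import Mathlib

open Real MeasureTheory Set

/-- The standard Gaussian measure on `ℝ`, with density `(2π)^{-1/2} exp(−x²/2)`
with respect to Lebesgue measure. -/
noncomputable def stdGaussian1 : Measure ℝ :=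
  volume.withDensity fun x =>
    ENNReal.ofReal ((Real.sqrt (2 * Real.pi))⁻¹ * Real.exp (-x ^ 2 / 2))

/-- The standard normal cumulative distribution function
`Φ(x) = (2π)^{-1/2} ∫_{−∞}^x exp(−t²/2) dt`. -/
noncomputable def stdNormalCDF (x : ℝ) : ℝ :=
  (Real.sqrt (2 * Real.pi))⁻¹ * ∫ t in Set.Iic x, Real.exp (-t ^ 2 / 2)

/- ### Auxiliary lemmas -/

lemma stdGaussian1_eq : stdGaussian1 = ProbabilityTheory.gaussianReal 0 1 := by
  rw [ProbabilityTheory.gaussianReal_of_var_ne_zero _ one_ne_zero]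
  unfold stdGaussian1 ProbabilityTheory.gaussianPDF ProbabilityTheory.gaussianPDFReal
  congr 1
  funext x
  norm_num

instance : IsProbabilityMeasure stdGaussian1 := by
  rw [stdGaussian1_eq]; infer_instance

lemma stdGaussian1_map_neg : stdGaussian1.map (fun x => -x) = stdGaussian1 := by
  rw [stdGaussian1_eq]
  have h := ProbabilityTheory.gaussianReal_map_const_mul (μ := 0) (v := 1) (-1)
  simp only [neg_one_mul, mul_zero] at h
  convert h using 2
  ext
  norm_num

lemma integrable_gaussFn : Integrable (fun t : ℝ => Real.exp (-t ^ 2 / 2)) := by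
  have h := integrable_exp_neg_mul_sq (by norm_num : (0:ℝ) < 1/2)
  convert h using 2 with t
  ring_nf

lemma sqrt_two_pi_pos : 0 < Real.sqrt (2 * Real.pi) :=
  Real.sqrt_pos.2 (by positivity)

lemma stdNormalCDF_nonneg (x : ℝ) : 0 ≤ stdNormalCDF x := by
  unfold stdNormalCDF
  apply mul_nonneg (by positivity)
  exact setIntegral_nonneg measurableSet_Iic (fun t _ => (Real.exp_pos _).le)

lemma integral_gaussFn : ∫ t : ℝ, Real.exp (-t ^ 2 / 2) = Real.sqrt (2 * Real.pi) := by
  have h := integral_gaussian (1/2 : ℝ)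
  rw [show Real.sqrt (π / (1/2)) = Real.sqrt (2 * π) by norm_num [mul_comm]] at h
  rw [← h]
  congr 1 with t
  ring_nf

lemma stdNormalCDF_le_one (x : ℝ) : stdNormalCDF x ≤ 1 := by
  unfold stdNormalCDF
  rw [show (1:ℝ) = (Real.sqrt (2 * Real.pi))⁻¹ * Real.sqrt (2 * Real.pi) by
    rw [inv_mul_cancel₀ sqrt_two_pi_pos.ne']]
  apply mul_le_mul_of_nonneg_left _ (by positivity)
  rw [← integral_gaussFn]
  exact setIntegral_le_integral integrable_gaussFn (ae_of_all _ fun t => (Real.exp_pos _).le)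

lemma stdNormalCDF_sub (x y : ℝ) :
    stdNormalCDF y - stdNormalCDF x
      = (Real.sqrt (2 * Real.pi))⁻¹ * ∫ t in x..y, Real.exp (-t ^ 2 / 2) := by
  unfold stdNormalCDF
  rw [← mul_sub, intervalIntegral.integral_Iic_sub_Iic integrable_gaussFn.integrableOn
    integrable_gaussFn.integrableOn]

lemma stdNormalCDF_mono : Monotone stdNormalCDF := by
  intro x y hxy
  have h := stdNormalCDF_sub x y
  have : 0 ≤ ∫ t in x..y, Real.exp (-t ^ 2 / 2) :=
    intervalIntegral.integral_nonneg hxy (fun t _ => (Real.exp_pos _).le)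
  nlinarith [sqrt_two_pi_pos, inv_nonneg.2 sqrt_two_pi_pos.le]

lemma stdNormalCDF_two_point {h u v : ℝ} (hh : 0 ≤ h) (hu : 0 ≤ u) (huv : u ≤ v) :
    stdNormalCDF (h + v) + stdNormalCDF (h - v)
      ≤ stdNormalCDF (h + u) + stdNormalCDF (h - u) := by
  have key : (∫ t in (h+u)..(h+v), Real.exp (-t ^ 2 / 2))
      ≤ ∫ t in (h-v)..(h-u), Real.exp (-t ^ 2 / 2) := by
    have hcv : (∫ t in (h-v)..(h-u), Real.exp (-t ^ 2 / 2))
        = ∫ t in (h+u)..(h+v), Real.exp (-(2*h - t) ^ 2 / 2) := by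
      rw [intervalIntegral.integral_comp_sub_left (fun s => Real.exp (-s ^ 2 / 2)) (2*h)]
      congr 1 <;> ring
    rw [hcv]
    apply intervalIntegral.integral_mono_on (by linarith)
    · exact integrable_gaussFn.intervalIntegrable
    · exact (Continuous.intervalIntegrable (by fun_prop) _ _)
    · intro t ht
      apply Real.exp_le_exp.2
      have h1 : h + u ≤ t := ht.1
      have h2 : (2*h - t)^2 ≤ t^2 := by nlinarith
      linarith
  have d1 := stdNormalCDF_sub (h+u) (h+v)
  have d2 := stdNormalCDF_sub (h-v) (h-u)
  have hkey := mul_le_mul_of_nonneg_left key (inv_nonneg.2 sqrt_two_pi_pos.le)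
  linarith

lemma stdNormalCDF_pair_anti {h t T : ℝ} (hh : 0 ≤ h) (hT : |t| ≤ T) :
    stdNormalCDF (h + T) + stdNormalCDF (h - T)
      ≤ stdNormalCDF (h + t) + stdNormalCDF (h - t) := by
  rcases le_or_gt 0 t with ht | ht
  · exact stdNormalCDF_two_point hh ht (by rwa [abs_of_nonneg ht] at hT)
  · have h2 := stdNormalCDF_two_point hh (u := -t) (v := T) (by linarith)
      (by rwa [abs_of_neg ht] at hT)
    rw [sub_neg_eq_add, ← sub_eq_add_neg] at h2
    linarith

lemma stdNormalCDF_pair_eq (m h z : ℝ) :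
    stdNormalCDF (m * z + h) + stdNormalCDF (m * (-z) + h)
      = stdNormalCDF (h + |m * z|) + stdNormalCDF (h - |m * z|) := by
  rcases le_or_gt 0 (m * z) with hz | hz
  · rw [abs_of_nonneg hz, show m * z + h = h + m * z by ring,
      show m * (-z) + h = h - m * z by ring]
  · rw [abs_of_neg hz, show m * z + h = h - -(m * z) by ring,
      show m * (-z) + h = h + -(m * z) by ring]
    ring

lemma stdGaussian1_integrable_of_bdd {g : ℝ → ℝ} (hg : Measurable g)
    (hb : ∀ x, ‖g x‖ ≤ 1) : Integrable g stdGaussian1 :=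
  ⟨hg.aestronglyMeasurable, HasFiniteIntegral.of_bounded (ae_of_all _ hb)⟩

section main

variable {m h : ℝ}

lemma f_meas (m h : ℝ) (hm : 0 ≤ m) : Measurable (fun x => stdNormalCDF (m * x + h)) :=
  (stdNormalCDF_mono.comp (fun x y hxy => by dsimp; nlinarith : Monotone
    (fun x : ℝ => m * x + h))).measurable

lemma f_norm (m h x : ℝ) : ‖stdNormalCDF (m * x + h)‖ ≤ 1 := by
  rw [Real.norm_eq_abs, abs_le]
  exact ⟨by linarith [stdNormalCDF_nonneg (m * x + h)], stdNormalCDF_le_one _⟩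

lemma f_int (hm : 0 ≤ m) : Integrable (fun x => stdNormalCDF (m * x + h)) stdGaussian1 :=
  stdGaussian1_integrable_of_bdd (f_meas m h hm) (f_norm m h)

lemma fneg_int (hm : 0 ≤ m) :
    Integrable (fun x => stdNormalCDF (m * (-x) + h)) stdGaussian1 :=
  stdGaussian1_integrable_of_bdd ((f_meas m h hm).comp measurable_neg) (fun x => f_norm m h (-x))

lemma negEmb : MeasurableEmbedding (fun x : ℝ => -x) :=
  (MeasurableEquiv.neg ℝ).measurableEmbedding

/-- reflection identity for set integrals over symmetric sets. -/
lemma refl_setIntegral (g : ℝ → ℝ) {s : Set ℝ} (hs : (fun x : ℝ => -x) ⁻¹' s = s) :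
    ∫ x in s, g (-x) ∂stdGaussian1 = ∫ x in s, g x ∂stdGaussian1 := by
  conv_rhs => rw [← stdGaussian1_map_neg]
  rw [negEmb.setIntegral_map g s, hs]

lemma refl_integral (g : ℝ → ℝ) :
    ∫ x, g (-x) ∂stdGaussian1 = ∫ x, g x ∂stdGaussian1 := by
  conv_rhs => rw [← stdGaussian1_map_neg]
  rw [negEmb.integral_map g]

/-- The mean of `Φ(m x + h)` is at most `Φ(h)` when `h ≥ 0`. -/
lemma mean_le (hm : 0 ≤ m) (hh : 0 ≤ h) :
    (∫ x, stdNormalCDF (m * x + h) ∂stdGaussian1) ≤ stdNormalCDF h := by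
  have h1 : (∫ x, stdNormalCDF (m * x + h) ∂stdGaussian1)
      + (∫ x, stdNormalCDF (m * (-x) + h) ∂stdGaussian1)
      = ∫ x, (stdNormalCDF (m * x + h) + stdNormalCDF (m * (-x) + h)) ∂stdGaussian1 :=
    (integral_add (f_int hm) (fneg_int hm)).symm
  have h2 : (∫ x, stdNormalCDF (m * (-x) + h) ∂stdGaussian1)
      = ∫ x, stdNormalCDF (m * x + h) ∂stdGaussian1 :=
    refl_integral (fun x => stdNormalCDF (m * x + h))
  have h3 : ∫ x, (stdNormalCDF (m * x + h) + stdNormalCDF (m * (-x) + h)) ∂stdGaussian1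
      ≤ ∫ _x, (2 * stdNormalCDF h) ∂stdGaussian1 := by
    apply integral_mono ((f_int hm).add (fneg_int hm)) (integrable_const _)
    intro x
    have hpa := stdNormalCDF_pair_anti (t := 0) (T := |m * x|) hh (by simp; positivity)
    have he := stdNormalCDF_pair_eq m h x
    simp only [Pi.add_apply, add_zero, sub_zero] at hpa ⊢
    linarith
  rw [integral_const] at h3
  simp only [probReal_univ, smul_eq_mul, one_mul] at h3
  linarith

lemma const_le_setIntegral {S : Set ℝ} (hS : MeasurableSet S) (c : ℝ)
    (hm : 0 ≤ m) (hc : ∀ x ∈ S, c ≤ stdNormalCDF (m * x + h)) :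
    c * (stdGaussian1 S).toReal ≤ ∫ x in S, stdNormalCDF (m * x + h) ∂stdGaussian1 := by
  have := setIntegral_mono_on ((integrable_const c).integrableOn)
    ((f_int hm).integrableOn) hS hc
  rwa [setIntegral_const, smul_eq_mul, mul_comm] at this

/-- The symmetric-interval case. -/
lemma sym_interval (hm : 0 ≤ m) (hh : 0 ≤ h) {s : ℝ} (hs : 0 ≤ s) :
    (∫ x, stdNormalCDF (m * x + h) ∂stdGaussian1) * (stdGaussian1 (Icc (-s) s)).toReal
      ≤ ∫ x in Icc (-s) s, stdNormalCDF (m * x + h) ∂stdGaussian1 := by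
  set μ := stdGaussian1
  set f : ℝ → ℝ := fun x => stdNormalCDF (m * x + h) with hf
  set J : Set ℝ := Icc (-s) s with hJ
  have hJm : MeasurableSet J := measurableSet_Icc
  have hnegJ : (fun x : ℝ => -x) ⁻¹' J = J := by
    ext x
    simp only [mem_preimage, hJ, mem_Icc]
    constructor <;> (intro hx; constructor <;> linarith [hx.1, hx.2])
  have hnegJc : (fun x : ℝ => -x) ⁻¹' Jᶜ = Jᶜ := by
    rw [preimage_compl, hnegJ]
  set c : ℝ := (f s + f (-s)) / 2 with hc
  have hc0 : 0 ≤ c := by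
    have := stdNormalCDF_nonneg (m * s + h)
    have := stdNormalCDF_nonneg (m * (-s) + h)
    simp only [hc, hf]
    linarith
  -- pair bounds
  have pairJ : ∀ x ∈ J, c ≤ (f x + f (-x)) / 2 := by
    intro x hx
    have hax : |m * x| ≤ |m * s| := by
      rw [abs_mul, abs_mul]
      apply mul_le_mul_of_nonneg_left _ (abs_nonneg m)
      rw [abs_of_nonneg hs]
      exact abs_le.2 ⟨hx.1, hx.2⟩
    have key := stdNormalCDF_pair_anti (t := |m * x|) (T := |m * s|) hh (by rwa [abs_abs])
    have e1 := stdNormalCDF_pair_eq m h x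
    have e2 := stdNormalCDF_pair_eq m h s
    simp only [hc, hf]
    linarith [e1, e2, key]
  have pairJc : ∀ x ∈ Jᶜ, (f x + f (-x)) / 2 ≤ c := by
    intro x hx
    have hax : |m * s| ≤ |m * x| := by
      rw [abs_mul, abs_mul]
      apply mul_le_mul_of_nonneg_left _ (abs_nonneg m)
      rw [abs_of_nonneg hs]
      simp only [hJ, mem_compl_iff, mem_Icc, not_and, not_le] at hx
      rcases le_or_gt (-s) x with h' | h'
      · have := hx h'
        calc s ≤ x := this.le
        _ ≤ |x| := le_abs_self x
      · calc s ≤ -x := by linarith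
        _ ≤ |x| := neg_le_abs x
    have key := stdNormalCDF_pair_anti (t := |m * s|) (T := |m * x|) hh (by rwa [abs_abs])
    have e1 := stdNormalCDF_pair_eq m h x
    have e2 := stdNormalCDF_pair_eq m h s
    simp only [hc, hf]
    linarith [e1, e2, key]
  -- reflection identities
  have reflJ : ∫ x in J, f (-x) ∂μ = ∫ x in J, f x ∂μ := refl_setIntegral f hnegJ
  have reflJc : ∫ x in Jᶜ, f (-x) ∂μ = ∫ x in Jᶜ, f x ∂μ := refl_setIntegral f hnegJc
  have hfint : Integrable f μ := f_int hm
  have hfnint : Integrable (fun x => f (-x)) μ := fneg_int hm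
  have avgJ : ∫ x in J, (f x + f (-x)) / 2 ∂μ = ∫ x in J, f x ∂μ := by
    rw [integral_div, integral_add hfint.integrableOn hfnint.integrableOn, reflJ]
    ring
  have avgJc : ∫ x in Jᶜ, (f x + f (-x)) / 2 ∂μ = ∫ x in Jᶜ, f x ∂μ := by
    rw [integral_div, integral_add hfint.integrableOn hfnint.integrableOn, reflJc]
    ring
  set A := ∫ x in J, f x ∂μ with hA
  set B := ∫ x in Jᶜ, f x ∂μ with hB
  set P := (μ J).toReal with hP
  set Q := (μ Jᶜ).toReal with hQ
  have hP0 : 0 ≤ P := ENNReal.toReal_nonneg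
  have hQ0 : 0 ≤ Q := ENNReal.toReal_nonneg
  have hPQ : P + Q = 1 := by
    rw [hP, hQ, ← ENNReal.toReal_add (measure_ne_top μ J) (measure_ne_top μ Jᶜ),
      measure_add_measure_compl hJm]
    simp
  have hAB : A + B = ∫ x, f x ∂μ := integral_add_compl hJm hfint
  have hcP : c * P ≤ A := by
    rw [← avgJ]
    have := setIntegral_mono_on ((integrable_const c).integrableOn)
      ((hfint.add hfnint).div_const 2).integrableOn hJm pairJ
    rwa [setIntegral_const, smul_eq_mul, mul_comm] at this
  have hBQ : B ≤ c * Q := by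
    rw [← avgJc]
    have := setIntegral_mono_on
      ((hfint.add hfnint).div_const 2).integrableOn
      ((integrable_const c).integrableOn) hJm.compl pairJc
    rwa [setIntegral_const, smul_eq_mul, mul_comm] at this
  rw [← hAB]
  have s1 : B * P ≤ (c * Q) * P := mul_le_mul_of_nonneg_right hBQ hP0
  have s2 : (c * P) * Q ≤ A * Q := mul_le_mul_of_nonneg_right hcP hQ0
  calc (A + B) * P = A * P + B * P := by ring
    _ ≤ A * P + (c * Q) * P := by linarith
    _ = A * P + (c * P) * Q := by ring
    _ ≤ A * P + A * Q := by linarith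
    _ = A * (P + Q) := by ring
    _ = A := by rw [hPQ, mul_one]

end main

/-- Correlation inequality for a half-plane `K = {(x,y) : y ≤ m x + h}` with `m ≥ 0`,
`h ≥ 0`, and a strip `L = {(x,y) : a ≤ x ≤ b}` with `(a+b)/2 ≥ 0`:
`∫_a^b Φ(m x + h) dμ₁ ≥ (∫_ℝ Φ(m x + h) dμ₁) · μ₁([a,b])`,
i.e. `μ₂(K ∩ L) ≥ μ₂(K) · μ₂(L)`. -/
theorem halfplane_strip_correlation_nonneg_h
    (m h a b : ℝ) (hm : 0 ≤ m) (hh : 0 ≤ h) (hab : a < b) (hmid : 0 ≤ (a + b) / 2) :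
    ∫ x in Set.Icc a b, stdNormalCDF (m * x + h) ∂stdGaussian1 ≥
      (∫ x, stdNormalCDF (m * x + h) ∂stdGaussian1) *
        (stdGaussian1 (Set.Icc a b)).toReal := by
  set μ := stdGaussian1
  set f : ℝ → ℝ := fun x => stdNormalCDF (m * x + h) with hf
  set Ef := ∫ x, f x ∂μ with hEf
  -- pointwise bound on nonnegative part
  have hptwise : ∀ x : ℝ, 0 ≤ x → Ef ≤ f x := by
    intro x hx
    have h1 : Ef ≤ stdNormalCDF h := mean_le hm hh
    have h2 : stdNormalCDF h ≤ stdNormalCDF (m * x + h) :=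
      stdNormalCDF_mono (by nlinarith)
    exact h1.trans h2
  rcases le_or_gt 0 a with ha | ha
  · -- the interval lies in the nonnegative reals
    exact const_le_setIntegral measurableSet_Icc Ef hm
      (fun x hx => hptwise x (le_trans ha hx.1))
  · -- a < 0; split at s = -a
    set s : ℝ := -a with hs
    have hs0 : 0 < s := by linarith
    have hsb : s ≤ b := by linarith [hmid]
    have hsplit : Icc a b = Icc a s ∪ Ioc s b := (Icc_union_Ioc_eq_Icc (by linarith) hsb).symm
    have hdisj : Disjoint (Icc a s) (Ioc s b) := by
      rw [Set.disjoint_left]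
      rintro x ⟨_, hx2⟩ ⟨hx3, _⟩
      linarith
    have hint : Integrable f μ := f_int hm
    have hIsplit : ∫ x in Icc a b, f x ∂μ
        = (∫ x in Icc a s, f x ∂μ) + ∫ x in Ioc s b, f x ∂μ := by
      rw [hsplit]
      exact setIntegral_union hdisj measurableSet_Ioc hint.integrableOn hint.integrableOn
    have hMsplit : (μ (Icc a b)).toReal
        = (μ (Icc a s)).toReal + (μ (Ioc s b)).toReal := by
      rw [hsplit, measure_union hdisj measurableSet_Ioc,
        ENNReal.toReal_add (measure_ne_top _ _) (measure_ne_top _ _)]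
    have h1 : Ef * (μ (Icc a s)).toReal ≤ ∫ x in Icc a s, f x ∂μ := by
      have := sym_interval hm hh hs0.le
      rwa [show -s = a by rw [hs]; ring] at this
    have h2 : Ef * (μ (Ioc s b)).toReal ≤ ∫ x in Ioc s b, f x ∂μ :=
      const_le_setIntegral measurableSet_Ioc Ef hm
        (fun x hx => hptwise x (le_of_lt (lt_of_lt_of_le hs0 hx.1.le)))
    rw [ge_iff_le, hIsplit, hMsplit, mul_add]
    exact add_le_add h1 h2
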